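/- arXiv:cs/0207090 — 2 statements merged into one kernel-verified Lean document; each statement's English description precedes it below -/
import Mathlib

section
/- For every set of propositional formulas Γ: Γ ⊢_CL ⊥ if and only if there is a finite nonempty Δ ⊆ Ω such that Γ ⊢_CLuN Dab(Δ). -/
/-- Propositional formulas: variables, ⊥, ⊃, ∧, ∨, ≡, and paraconsistent negation ~. -/
inductive Formula : Type
  | var : ℕ → Formula
  | bot : Formula
  | imp : Formula → Formula → Formula
  | conj : Formula → Formula → Formula
  | disj : Formula → Formula → Formula
  | equiv : Formula → Formula → Formula
  | pneg : Formula → Formula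
  deriving DecidableEq

namespace Formula

/-- Classical negation: ¬A := A ⊃ ⊥. -/
def neg (A : Formula) : Formula := imp A bot

end Formula

/-- Hilbert-style derivability. `cl = false` gives CLuN (full positive classical logic,
including Peirce's law, plus ⊥ ⊃ A and A ∨ ~A, with modus ponens as only rule);
`cl = true` additionally has the axiom schema (A ∧ ~A) ⊃ B, giving CL. -/
inductive Deriv (cl : Bool) (Γ : Set Formula) : Formula → Prop
  | prem {A : Formula} : A ∈ Γ → Deriv cl Γ A
  | axK (A B : Formula) : Deriv cl Γ (A.imp (B.imp A))
  | axS (A B C : Formula) : Deriv cl Γ ((A.imp (B.imp C)).imp ((A.imp B).imp (A.imp C)))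
  | axPeirce (A B : Formula) : Deriv cl Γ (((A.imp B).imp A).imp A)
  | axAndElimL (A B : Formula) : Deriv cl Γ ((A.conj B).imp A)
  | axAndElimR (A B : Formula) : Deriv cl Γ ((A.conj B).imp B)
  | axAndIntro (A B : Formula) : Deriv cl Γ (A.imp (B.imp (A.conj B)))
  | axOrIntroL (A B : Formula) : Deriv cl Γ (A.imp (A.disj B))
  | axOrIntroR (A B : Formula) : Deriv cl Γ (B.imp (A.disj B))
  | axOrElim (A B C : Formula) : Deriv cl Γ ((A.imp C).imp ((B.imp C).imp ((A.disj B).imp C)))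
  | axIffElimL (A B : Formula) : Deriv cl Γ ((A.equiv B).imp (A.imp B))
  | axIffElimR (A B : Formula) : Deriv cl Γ ((A.equiv B).imp (B.imp A))
  | axIffIntro (A B : Formula) : Deriv cl Γ ((A.imp B).imp ((B.imp A).imp (A.equiv B)))
  | axBot (A : Formula) : Deriv cl Γ (Formula.bot.imp A)
  | axEM (A : Formula) : Deriv cl Γ (A.disj A.pneg)
  | axCL (A B : Formula) : cl = true → Deriv cl Γ ((A.conj A.pneg).imp B)
  | mp {A B : Formula} : Deriv cl Γ (A.imp B) → Deriv cl Γ A → Deriv cl Γ B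

/-- Γ ⊢_CLuN A -/
def CLuN (Γ : Set Formula) (A : Formula) : Prop := Deriv false Γ A

/-- Γ ⊢_CL A -/
def CL (Γ : Set Formula) (A : Formula) : Prop := Deriv true Γ A

/-- The set of abnormalities Ω: all formulas of the form A ∧ ~A. -/
def Omega : Set Formula := {F | ∃ A : Formula, F = A.conj A.pneg}

/-- An arbitrary (noncomputable) linear order on formulas, used only to pick a canonical
ordering of the disjuncts of a Dab-formula. -/
noncomputable instance : LinearOrder Formula :=
  @linearOrderOfSTO Formula WellOrderingRel _ (Classical.decRel _)

/-- Disjunction of a list of formulas; the empty disjunction is ⊥. -/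
def listDisj : List Formula → Formula
  | [] => Formula.bot
  | [A] => A
  | A :: B :: rest => A.disj (listDisj (B :: rest))

/-- Dab(Δ): the disjunction of the members of the finite set Δ (by convention Dab(∅) := ⊥). -/
noncomputable def Dab (Δ : Finset Formula) : Formula := listDisj (Δ.sort (· ≤ ·))

/-- Dab(Δ) is a minimal Dab-consequence of Γ: Δ is finite and nonempty, Δ ⊆ Ω,
Γ ⊢_CLuN Dab(Δ), and no nonempty Δ' ⊊ Δ has Γ ⊢_CLuN Dab(Δ'). -/
def MinDabConsequence (Γ : Set Formula) (Δ : Finset Formula) : Prop :=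
  Δ.Nonempty ∧ ↑Δ ⊆ Omega ∧ CLuN Γ (Dab Δ) ∧
    ∀ Δ' : Finset Formula, Δ'.Nonempty → Δ' ⊂ Δ → ¬ CLuN Γ (Dab Δ')

/-- U(Γ): the set of formulas unreliable with respect to Γ. -/
def U (Γ : Set Formula) : Set Formula :=
  {A | ∃ Δ : Finset Formula, MinDabConsequence Γ Δ ∧ A ∈ Δ}

/-!
A CL-derivation is simulated in CLuN at the price of a disjunction of abnormalities: each
instance of the CL axiom `(X ∧ ~X) ⊃ B` is replaced by the CLuN theorem `((X ∧ ~X) ⊃ B) ∨ X`,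
and the abnormalities so collected are carried along through modus ponens. For `⊥` this yields
`Γ ⊢_CLuN Dab(Δ)`. Conversely, every abnormality implies `⊥` in CL, hence so does `Dab(Δ)`.
-/

namespace Deriv

variable {cl : Bool} {Γ : Set Formula} {A B C D : Formula}

theorem mono {cl' : Bool} {Γ' : Set Formula} (hcl : cl ≤ cl') (hΓ : Γ ⊆ Γ')
    (h : Deriv cl Γ A) : Deriv cl' Γ' A := by
  induction h with
  | prem h => exact .prem (hΓ h)
  | axK A B => exact .axK A B
  | axS A B C => exact .axS A B C
  | axPeirce A B => exact .axPeirce A B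
  | axAndElimL A B => exact .axAndElimL A B
  | axAndElimR A B => exact .axAndElimR A B
  | axAndIntro A B => exact .axAndIntro A B
  | axOrIntroL A B => exact .axOrIntroL A B
  | axOrIntroR A B => exact .axOrIntroR A B
  | axOrElim A B C => exact .axOrElim A B C
  | axIffElimL A B => exact .axIffElimL A B
  | axIffElimR A B => exact .axIffElimR A B
  | axIffIntro A B => exact .axIffIntro A B
  | axBot A => exact .axBot A
  | axEM A => exact .axEM A
  | axCL A B h => exact .axCL A B (hcl h)
  | mp _ _ ih₁ ih₂ => exact ih₁.mp ih₂

theorem weaken (h : Deriv cl Γ A) : Deriv cl (insert B Γ) A :=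
  h.mono le_rfl (Set.subset_insert B Γ)

theorem hyp : Deriv cl (insert A Γ) A :=
  .prem (Set.mem_insert A Γ)

theorem imp_self : Deriv cl Γ (A.imp A) :=
  ((axS A (A.imp A) A).mp (axK A (A.imp A))).mp (axK A A)

theorem imp_intro (h : Deriv cl (insert A Γ) B) : Deriv cl Γ (A.imp B) := by
  induction h with
  | prem h =>
    rcases h with rfl | h
    · exact imp_self
    · exact (axK _ _).mp (.prem h)
  | axK X Y => exact (axK _ _).mp (.axK X Y)
  | axS X Y Z => exact (axK _ _).mp (.axS X Y Z)
  | axPeirce X Y => exact (axK _ _).mp (.axPeirce X Y)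
  | axAndElimL X Y => exact (axK _ _).mp (.axAndElimL X Y)
  | axAndElimR X Y => exact (axK _ _).mp (.axAndElimR X Y)
  | axAndIntro X Y => exact (axK _ _).mp (.axAndIntro X Y)
  | axOrIntroL X Y => exact (axK _ _).mp (.axOrIntroL X Y)
  | axOrIntroR X Y => exact (axK _ _).mp (.axOrIntroR X Y)
  | axOrElim X Y Z => exact (axK _ _).mp (.axOrElim X Y Z)
  | axIffElimL X Y => exact (axK _ _).mp (.axIffElimL X Y)
  | axIffElimR X Y => exact (axK _ _).mp (.axIffElimR X Y)
  | axIffIntro X Y => exact (axK _ _).mp (.axIffIntro X Y)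
  | axBot X => exact (axK _ _).mp (.axBot X)
  | axEM X => exact (axK _ _).mp (.axEM X)
  | axCL X Y h => exact (axK _ _).mp (.axCL X Y h)
  | mp _ _ ih₁ ih₂ => exact ((axS _ _ _).mp ih₁).mp ih₂

theorem imp_trans (h₁ : Deriv cl Γ (A.imp B)) (h₂ : Deriv cl Γ (B.imp C)) :
    Deriv cl Γ (A.imp C) :=
  imp_intro (h₂.weaken.mp (h₁.weaken.mp hyp))

theorem or_elim (h : Deriv cl Γ (A.disj B)) (h₁ : Deriv cl (insert A Γ) C)
    (h₂ : Deriv cl (insert B Γ) C) : Deriv cl Γ C :=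
  (((axOrElim A B C).mp (imp_intro h₁)).mp (imp_intro h₂)).mp h

theorem disj_mp (hAB : Deriv cl Γ ((A.imp B).disj C)) (hA : Deriv cl Γ (A.disj C)) :
    Deriv cl Γ (B.disj C) :=
  or_elim hAB
    (or_elim hA.weaken ((axOrIntroL B C).mp (hyp.weaken.mp hyp)) ((axOrIntroR B C).mp hyp))
    ((axOrIntroR B C).mp hyp)

theorem disj_of_disj_right (h : Deriv cl Γ (A.disj C)) (hCD : Deriv cl Γ (C.imp D)) :
    Deriv cl Γ (A.disj D) :=
  or_elim h ((axOrIntroL A D).mp hyp) ((axOrIntroR A D).mp (hCD.weaken.mp hyp))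

-- Peirce's law reduces this to deriving the formula from its own classical negation.
theorem imp_disj_self : Deriv cl Γ ((A.imp B).disj A) :=
  (axPeirce _ Formula.bot).mp <| imp_intro <| (axOrIntroL _ A).mp <| imp_intro <|
    (axBot B).mp (hyp.weaken.mp ((axOrIntroR _ A).mp hyp))

theorem imp_listDisj_of_mem {l : List Formula} (h : A ∈ l) :
    Deriv cl Γ (A.imp (listDisj l)) := by
  induction l using listDisj.induct with
  | case1 => cases h
  | case2 B =>
    rw [List.mem_singleton.mp h]
    exact imp_self
  | case3 B E rest ih =>
    rcases List.mem_cons.mp h with rfl | h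
    · exact axOrIntroL _ _
    · exact imp_trans (ih h) (axOrIntroR _ _)

theorem listDisj_imp {l : List Formula} (h : ∀ B ∈ l, Deriv cl Γ (B.imp C)) :
    Deriv cl Γ ((listDisj l).imp C) := by
  induction l using listDisj.induct with
  | case1 => exact axBot C
  | case2 B => exact h B (List.mem_singleton_self B)
  | case3 B E rest ih =>
    exact ((axOrElim _ _ C).mp (h B List.mem_cons_self)).mp
      (ih fun x hx => h x (List.mem_cons_of_mem B hx))

theorem imp_dab_of_mem {Δ : Finset Formula} (h : A ∈ Δ) : Deriv cl Γ (A.imp (Dab Δ)) :=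
  imp_listDisj_of_mem ((Finset.mem_sort _).2 h)

theorem dab_imp {Δ : Finset Formula} (h : ∀ B ∈ Δ, Deriv cl Γ (B.imp C)) :
    Deriv cl Γ ((Dab Δ).imp C) :=
  listDisj_imp fun B hB => h B ((Finset.mem_sort _).1 hB)

theorem dab_imp_dab {Δ Δ' : Finset Formula} (h : Δ ⊆ Δ') :
    Deriv cl Γ ((Dab Δ).imp (Dab Δ')) :=
  dab_imp fun _ hB => imp_dab_of_mem (h hB)

end Deriv

open Deriv in
theorem exists_dab_of_cl {Γ : Set Formula} {A : Formula} (h : CL Γ A) :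
    ∃ Δ : Finset Formula, ↑Δ ⊆ Omega ∧ CLuN Γ (A.disj (Dab Δ)) := by
  have of_clun {B : Formula} (hB : CLuN Γ B) :
      ∃ Δ : Finset Formula, ↑Δ ⊆ Omega ∧ CLuN Γ (B.disj (Dab Δ)) :=
    ⟨∅, by simp, (axOrIntroL _ _).mp hB⟩
  induction h with
  | prem h => exact of_clun (.prem h)
  | axK A B => exact of_clun (.axK A B)
  | axS A B C => exact of_clun (.axS A B C)
  | axPeirce A B => exact of_clun (.axPeirce A B)
  | axAndElimL A B => exact of_clun (.axAndElimL A B)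
  | axAndElimR A B => exact of_clun (.axAndElimR A B)
  | axAndIntro A B => exact of_clun (.axAndIntro A B)
  | axOrIntroL A B => exact of_clun (.axOrIntroL A B)
  | axOrIntroR A B => exact of_clun (.axOrIntroR A B)
  | axOrElim A B C => exact of_clun (.axOrElim A B C)
  | axIffElimL A B => exact of_clun (.axIffElimL A B)
  | axIffElimR A B => exact of_clun (.axIffElimR A B)
  | axIffIntro A B => exact of_clun (.axIffIntro A B)
  | axBot A => exact of_clun (.axBot A)
  | axEM A => exact of_clun (.axEM A)
  | axCL A B _ =>
    exact ⟨{A.conj A.pneg}, by simp [Omega],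
      disj_of_disj_right imp_disj_self (imp_dab_of_mem (Finset.mem_singleton_self _))⟩
  | mp _ _ ih₁ ih₂ =>
    obtain ⟨Δ₁, hΔ₁, h₁⟩ := ih₁
    obtain ⟨Δ₂, hΔ₂, h₂⟩ := ih₂
    exact ⟨Δ₁ ∪ Δ₂, by simp [hΔ₁, hΔ₂],
      disj_mp (disj_of_disj_right h₁ (dab_imp_dab Finset.subset_union_left))
        (disj_of_disj_right h₂ (dab_imp_dab Finset.subset_union_right))⟩

/-- Γ ⊢_CL ⊥ iff there is a finite nonempty Δ ⊆ Ω such that Γ ⊢_CLuN Dab(Δ). -/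
theorem cl_bot_iff_dab (Γ : Set Formula) :
    CL Γ Formula.bot ↔
      ∃ Δ : Finset Formula, Δ.Nonempty ∧ ↑Δ ⊆ Omega ∧ CLuN Γ (Dab Δ) := by
  constructor
  · intro h
    obtain ⟨Δ, hΩ, hΔ⟩ := exists_dab_of_cl h
    have hdab : CLuN Γ (Dab Δ) := hΔ.or_elim ((Deriv.axBot _).mp Deriv.hyp) Deriv.hyp
    -- `Δ` may be empty; `Dab` of a superset is still derivable.
    let X := (Formula.var 0).conj (Formula.var 0).pneg
    refine ⟨insert X Δ, Finset.insert_nonempty X Δ, ?_, ?_⟩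
    · simpa [Set.insert_subset_iff, hΩ] using ⟨Formula.var 0, rfl⟩
    · exact (Deriv.dab_imp_dab (Finset.subset_insert X Δ)).mp hdab
  · rintro ⟨Δ, -, hΩ, hΔ⟩
    have hbot : CL Γ ((Dab Δ).imp Formula.bot) := Deriv.dab_imp fun B hB => by
      obtain ⟨A, rfl⟩ := hΩ hB
      exact .axCL A Formula.bot rfl
    exact hbot.mp (hΔ.mono (Bool.false_le true) subset_rfl)
end

section
/- (p∧q) ∧ ~(p∧q) ⊬_CLuN (p ∧ ~p) ∨ (q ∧ ~q): the formula (p ∧ ~p) ∨ (q ∧ ~q) is not CLuN-derivable from the single premise (p∧q) ∧ ~(p∧q), where p and q are distinct propositional variables. -/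
/-!
CLuN is sound for the valuations that treat the positive connectives classically but may make
`~A` true even when `A` is true. Taking all variables true and making `~A` true for a true
`A` only when `A` is `p ∧ q`, the premise holds while `p ∧ ~p` and `q ∧ ~q` both fail.
-/

namespace Formula

/-- Evaluation under the variable assignment `v`; `f A` decides the value of `~A` when `A`
is true (when `A` is false, `~A` is forced to be true by `A ∨ ~A`). -/
def eval (v : ℕ → Bool) (f : Formula → Bool) : Formula → Bool
  | var n => v n
  | bot => false
  | imp A B => !A.eval v f || B.eval v f
  | conj A B => A.eval v f && B.eval v f
  | disj A B => A.eval v f || B.eval v f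
  | equiv A B => A.eval v f == B.eval v f
  | pneg A => f A || !A.eval v f

end Formula

theorem CLuN.eval_eq_true {Γ : Set Formula} {A : Formula} (v : ℕ → Bool) (f : Formula → Bool)
    (hΓ : ∀ B ∈ Γ, B.eval v f = true) (h : CLuN Γ A) : A.eval v f = true := by
  induction h with
  | prem hA => exact hΓ _ hA
  | axCL _ _ hcl => cases hcl
  | mp _ _ ihAB ihA => simpa [Formula.eval, ihA] using ihAB
  | _ => simp [Formula.eval] <;> grind

theorem not_clun_distribute_abnormality_general (p q : ℕ) :
    ¬ CLuN
      {((Formula.var p).conj (Formula.var q)).conj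
        ((Formula.var p).conj (Formula.var q)).pneg}
      (((Formula.var p).conj (Formula.var p).pneg).disj
        ((Formula.var q).conj (Formula.var q).pneg)) := by
  intro h
  have := CLuN.eval_eq_true (fun _ => true)
    (fun A => decide (A = (Formula.var p).conj (Formula.var q)))
    (by rintro B rfl; simp [Formula.eval]) h
  simp [Formula.eval] at this

/-- (p∧q) ∧ ~(p∧q) ⊬_CLuN (p ∧ ~p) ∨ (q ∧ ~q), for distinct variables p, q. -/
theorem not_clun_distribute_abnormality (p q : ℕ) (hpq : p ≠ q) :
    ¬ CLuN
      {((Formula.var p).conj (Formula.var q)).conj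
        ((Formula.var p).conj (Formula.var q)).pneg}
      (((Formula.var p).conj (Formula.var p).pneg).disj
        ((Formula.var q).conj (Formula.var q).pneg)) :=
  not_clun_distribute_abnormality_general p q
end
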